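/- Generalized Young convolution inequality at a point: if p₁,…,p_k ≥ 1 satisfy ∑_{i=1}^k 1/p_i = k−1 and ρ₁,…,ρ_k are functions on ℝ^d with ρ_i ∈ L^{p_i}, then the k-fold convolution satisfies |(ρ₁ * ρ₂ * … * ρ_k)(0)| ≤ ∏_{i=1}^k ‖ρ_i‖_{p_i}. -/

import Mathlib

open MeasureTheory Finset
open scoped ENNReal NNReal

namespace MYoungAux


variable {ι : Type*} [DecidableEq ι] {M : Type*} [CommMonoid M]

lemma prod_ite_one_erase (s : Finset ι) (k : ι) (a : ι → M) :
    ∏ i ∈ s, (if i = k then 1 else a i) = ∏ i ∈ s.erase k, a i := by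
  rw [← Finset.prod_erase s (f := fun i => if i = k then 1 else a i) (if_pos rfl)]
  exact Finset.prod_congr rfl fun i hi => if_neg (Finset.ne_of_mem_erase hi)

lemma prod_ite_one_erase' (s : Finset ι) (k : ι) (a : ι → M) :
    ∏ i ∈ s, (if k = i then 1 else a i) = ∏ i ∈ s.erase k, a i := by
  rw [← prod_ite_one_erase s k a]
  refine Finset.prod_congr rfl fun i _ => ?_
  by_cases h : i = k
  · simp [h]
  · simp [h, Ne.symm h]

lemma rpow_sum (x : ℝ≥0∞) (s : Finset ι) {f : ι → ℝ} (hf : ∀ i ∈ s, 0 ≤ f i) :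
    x ^ (∑ i ∈ s, f i) = ∏ i ∈ s, x ^ f i := by
  induction s using Finset.cons_induction with
  | empty => simp
  | cons i s hi ih =>
    rw [Finset.sum_cons, Finset.prod_cons,
      ENNReal.rpow_add_of_nonneg _ _ (hf i (Finset.mem_cons_self i s))
        (Finset.sum_nonneg fun j hj => hf j (Finset.mem_cons_of_mem hj)),
      ih fun j hj => hf j (Finset.mem_cons_of_mem hj)]

lemma key_prod {n : ℕ} (t q : Fin n → ℝ) (ht : ∀ i, 0 ≤ t i)
    (hq : ∀ k, ∑ i ∈ Finset.univ.erase k, t i = q k) (F : Fin n → ℝ≥0∞) :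
    ∏ i, (∏ k ∈ Finset.univ.erase i, F k) ^ t i = ∏ k, F k ^ q k := by
  have h1 : ∀ i : Fin n, (∏ k ∈ Finset.univ.erase i, F k) ^ t i
      = ∏ k, (if k = i then 1 else F k ^ t i) := by
    intro i
    rw [prod_ite_one_erase, ENNReal.prod_rpow_of_nonneg (ht i)]
  calc ∏ i, (∏ k ∈ Finset.univ.erase i, F k) ^ t i
      = ∏ i, ∏ k, (if k = i then 1 else F k ^ t i) := Finset.prod_congr rfl fun i _ => h1 i
    _ = ∏ k, ∏ i, (if k = i then 1 else F k ^ t i) := Finset.prod_comm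
    _ = ∏ k, F k ^ q k := by
        refine Finset.prod_congr rfl fun k _ => ?_
        rw [prod_ite_one_erase' Finset.univ k fun i => F k ^ t i,
          ← rpow_sum _ _ fun i _ => ht i, hq k]

lemma lintegral_pi_prod {E : Type*} [MeasureSpace E] [SigmaFinite (volume : Measure E)] :
    ∀ {n : ℕ} (f : Fin n → E → ℝ≥0∞), (∀ i, Measurable (f i)) →
      ∫⁻ x : Fin n → E, ∏ i, f i (x i) = ∏ i, ∫⁻ x, f i x := by
  intro n
  induction n with
  | zero =>
    intro f _
    simp [volume_pi, lintegral_const, Measure.pi_empty_univ]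
  | succ n ih =>
    intro f hf
    calc ∫⁻ x : Fin (n+1) → E, ∏ i, f i (x i)
        = ∫⁻ y : E × (Fin n → E), f 0 y.1 * ∏ j : Fin n, f j.succ (y.2 j)
            ∂((volume : Measure E).prod (Measure.pi fun _ => (volume : Measure E))) := by
          rw [volume_pi, ← ((measurePreserving_piFinSuccAbove
            (fun _ : Fin (n+1) => (volume : Measure E)) 0).symm).lintegral_comp_emb
            (MeasurableEquiv.measurableEmbedding _)]
          congr 1
          funext y
          simp_rw [MeasurableEquiv.piFinSuccAbove_symm_apply, Fin.insertNthEquiv,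
            Equiv.coe_fn_mk, Fin.insertNth_zero, Fin.prod_univ_succ, Fin.cons_zero, Fin.cons_succ]
          simp
    _ = (∫⁻ x, f 0 x) * ∏ j : Fin n, ∫⁻ x, f j.succ x := by
          rw [lintegral_prod_mul (f := fun a => f 0 a) (g := fun b : Fin n → E => ∏ j : Fin n, f j.succ (b j)) (hf 0).aemeasurable
            ((Finset.measurable_prod Finset.univ fun j _ =>
              (hf j.succ).comp (measurable_pi_apply j)).aemeasurable)]
          rw [← ih (fun j => f j.succ) fun j => hf _, volume_pi]
    _ = ∏ i, ∫⁻ x, f i x := (Fin.prod_univ_succ fun i => ∫⁻ x, f i x).symm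



noncomputable def sigmaL (d m : ℕ) (j₀ : Fin m) :
    (Fin m → EuclideanSpace ℝ (Fin d)) →ₗ[ℝ] (Fin m → EuclideanSpace ℝ (Fin d)) where
  toFun u := Function.update u j₀ (-∑ k, u k)
  map_add' u v := by
    funext j
    rcases eq_or_ne j j₀ with rfl | h
    · simp only [Pi.add_apply, Function.update_self, Finset.sum_add_distrib, neg_add]
      try abel
    · simp [Function.update_of_ne h]
  map_smul' c u := by
    funext j
    rcases eq_or_ne j j₀ with rfl | h
    · simp [Function.update_self, Finset.smul_sum]
    · simp [Function.update_of_ne h]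

lemma sigmaL_apply {d m : ℕ} (j₀ : Fin m) (u : Fin m → EuclideanSpace ℝ (Fin d)) :
    sigmaL d m j₀ u = Function.update u j₀ (-∑ k, u k) := rfl

lemma sum_sigmaL {d m : ℕ} (j₀ : Fin m) (u : Fin m → EuclideanSpace ℝ (Fin d)) :
    ∑ k, sigmaL d m j₀ u k = -u j₀ := by
  rw [sigmaL_apply, Finset.sum_update_of_mem (Finset.mem_univ _),
    Finset.sum_sdiff_eq_sub (Finset.singleton_subset_iff.2 (Finset.mem_univ j₀)),
    Finset.sum_singleton]
  abel

lemma sigmaL_invol {d m : ℕ} (j₀ : Fin m) (u : Fin m → EuclideanSpace ℝ (Fin d)) :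
    sigmaL d m j₀ (sigmaL d m j₀ u) = u := by
  rw [sigmaL_apply (u := sigmaL d m j₀ u), sum_sigmaL, neg_neg, sigmaL_apply,
    Function.update_idem, Function.update_eq_self]

lemma sigmaL_mp {d m : ℕ} (j₀ : Fin m) :
    MeasurePreserving (sigmaL d m j₀) (volume : Measure (Fin m → EuclideanSpace ℝ (Fin d)))
      volume := by
  have hmeas : Measurable (sigmaL d m j₀) :=
    (sigmaL d m j₀).continuous_of_finiteDimensional.measurable
  refine ⟨hmeas, ?_⟩
  have hcomp : (sigmaL d m j₀).comp (sigmaL d m j₀) = LinearMap.id :=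
    LinearMap.ext fun u => by simp [LinearMap.comp_apply, sigmaL_invol]
  have hdet2 : LinearMap.det (sigmaL d m j₀) * LinearMap.det (sigmaL d m j₀) = 1 := by
    rw [← LinearMap.det_comp, hcomp, LinearMap.det_id]
  have hne : LinearMap.det (sigmaL d m j₀) ≠ 0 := by
    intro h; rw [h] at hdet2; norm_num at hdet2
  have habs : |(LinearMap.det (sigmaL d m j₀))⁻¹| = 1 := by
    rcases mul_self_eq_one_iff.1 hdet2 with h | h <;> rw [h] <;> norm_num
  haveI : Measure.IsAddHaarMeasure (volume : Measure (Fin m → EuclideanSpace ℝ (Fin d))) :=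
    Measure.pi.isAddHaarMeasure _
  rw [Measure.map_linearMap_addHaar_eq_smul_addHaar volume hne, habs]
  simp

lemma qmp_eval {d m : ℕ} (j : Fin m) :
    Measure.QuasiMeasurePreserving (fun u : Fin m → EuclideanSpace ℝ (Fin d) => u j)
      volume volume := by
  refine ⟨measurable_pi_apply j, Measure.AbsolutelyContinuous.mk fun s hs h0 => ?_⟩
  rw [Measure.map_apply (measurable_pi_apply j) hs, volume_pi]
  exact Measure.pi_eval_preimage_null _ h0


end MYoungAux

open MYoungAux

/-- Generalized Young convolution inequality at a point: if `p₀,…,p_m ≥ 1` satisfy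
`∑ 1/p_i = m` (i.e. `k − 1` with `k = m + 1` factors) and `ρ_i ∈ L^{p_i}(ℝ^d)`, then
`|(ρ₀ * ρ₁ * … * ρ_m)(0)| ≤ ∏ ‖ρ_i‖_{p_i}`. -/
theorem multilinear_young_at_zero (d m : ℕ) (p : Fin (m + 1) → ℝ) (hp : ∀ i, 1 ≤ p i)
    (hsum : ∑ i, 1 / p i = (m : ℝ))
    (ρ : Fin (m + 1) → EuclideanSpace ℝ (Fin d) → ℝ)
    (hρ : ∀ i, MemLp (ρ i) (ENNReal.ofReal (p i)) volume) :
    |∫ u : Fin m → EuclideanSpace ℝ (Fin d),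
        ρ 0 (-∑ j, u j) * ∏ j : Fin m, ρ j.succ (u j)| ≤
      ∏ i, (eLpNorm (ρ i) (ENNReal.ofReal (p i)) volume).toReal := by
  classical
  have hp0 : ∀ i, (0:ℝ) < p i := fun i => lt_of_lt_of_le one_pos (hp i)
  -- degenerate case m = 0 is impossible
  rcases Nat.eq_zero_or_pos m with hm0 | hm
  · exfalso
    subst hm0
    rw [Fin.sum_univ_one] at hsum
    have := one_div_pos.mpr (hp0 0)
    rw [hsum] at this
    exact lt_irrefl _ (by exact_mod_cast this)
  -- exponents
  set t : Fin (m+1) → ℝ := fun i => 1 - 1 / p i with ht_def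
  have ht0 : ∀ i, 0 ≤ t i := fun i => by
    have h1 : 1 / p i ≤ 1 := by rw [div_le_one (hp0 i)]; exact hp i
    simp only [ht_def]; linarith
  have hts : ∑ i, t i = 1 := by
    simp only [ht_def]
    rw [Finset.sum_sub_distrib, hsum, Finset.sum_const, Finset.card_univ, Fintype.card_fin,
      nsmul_eq_mul, mul_one]
    push_cast; ring
  have hq : ∀ k, ∑ i ∈ Finset.univ.erase k, t i = 1 / p k := by
    intro k
    have h := Finset.sum_erase_add Finset.univ t (Finset.mem_univ k)
    rw [hts] at h
    have h2 : t k = 1 - 1 / p k := rfl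
    rw [eq_sub_of_add_eq h, h2]
    ring
  -- measurable representatives
  set ρ' : Fin (m+1) → EuclideanSpace ℝ (Fin d) → ℝ := fun i => (hρ i).1.mk (ρ i) with hρ'def
  have hmeas : ∀ i, Measurable (ρ' i) := fun i => (hρ i).1.stronglyMeasurable_mk.measurable
  have hae : ∀ i, ρ i =ᵐ[volume] ρ' i := fun i => (hρ i).1.ae_eq_mk
  have hsnorm_eq : ∀ i, eLpNorm (ρ i) (ENNReal.ofReal (p i)) volume
      = eLpNorm (ρ' i) (ENNReal.ofReal (p i)) volume := fun i => eLpNorm_congr_ae (hae i)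
  -- the argument maps
  set A : Fin (m+1) → (Fin m → EuclideanSpace ℝ (Fin d)) → EuclideanSpace ℝ (Fin d) :=
    Fin.cons (fun u => -∑ j, u j) (fun j u => u j) with hA
  have hA0 : ∀ u, A 0 u = -∑ j, u j := fun u => by simp only [hA, Fin.cons_zero]
  have hAs : ∀ (j : Fin m) u, A j.succ u = u j := fun j u => by simp only [hA, Fin.cons_succ]
  have hAmeas : ∀ k, Measurable (A k) := by
    refine Fin.cases ?_ ?_
    · have : Measurable (fun u : Fin m → EuclideanSpace ℝ (Fin d) => -∑ j, u j) :=
        (Finset.measurable_sum Finset.univ fun j _ => measurable_pi_apply j).neg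
      simpa only [hA, Fin.cons_zero] using this
    · intro j
      simpa only [hA, Fin.cons_succ] using measurable_pi_apply (X := fun _ => EuclideanSpace ℝ (Fin d)) j
  -- the change-of-variables maps
  set τ : Fin (m+1) → (Fin m → EuclideanSpace ℝ (Fin d)) → (Fin m → EuclideanSpace ℝ (Fin d)) :=
    Fin.cons id (fun j₀ => ⇑(sigmaL d m j₀)) with hτ
  have hτmp : ∀ i, MeasurePreserving (τ i) volume volume := by
    refine Fin.cases ?_ ?_
    · simpa only [hτ, Fin.cons_zero] using MeasurePreserving.id volume
    · intro j₀
      simpa only [hτ, Fin.cons_succ] using sigmaL_mp (d := d) j₀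
  -- the reindexing maps
  set ee : Fin (m+1) → Fin m → Fin (m+1) := fun i j => if j.succ = i then 0 else j.succ with hee
  have hee_ne : ∀ i j, ee i j ≠ i := by
    intro i j
    simp only [hee]
    split
    · rename_i h; rw [← h]; exact (Fin.succ_ne_zero j).symm
    · assumption
  have hee_inj : ∀ i, Function.Injective (ee i) := by
    intro i j j' h
    simp only [hee] at h
    split at h <;> split at h
    · rename_i h1 h2; exact Fin.succ_injective _ (h1.trans h2.symm)
    · exact absurd h.symm (Fin.succ_ne_zero j')
    · exact absurd h (Fin.succ_ne_zero j)
    · exact Fin.succ_injective _ h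
  have hee_erase : ∀ (i : Fin (m+1)) (H : Fin (m+1) → ℝ≥0∞),
      ∏ k ∈ Finset.univ.erase i, H k = ∏ j, H (ee i j) := by
    intro i H
    refine (Finset.prod_nbij (fun j => ee i j) ?_ ?_ ?_ ?_).symm
    · intro j _
      exact Finset.mem_erase.2 ⟨hee_ne i j, Finset.mem_univ _⟩
    · exact fun j _ j' _ h => hee_inj i h
    · intro k hk
      rcases Finset.mem_erase.1 hk with ⟨hki, -⟩
      rcases eq_or_ne k 0 with rfl | hk0
      · have hi0 : i ≠ 0 := Ne.symm hki
        obtain ⟨j, hj⟩ := Fin.exists_succ_eq.2 hi0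
        refine ⟨j, Finset.mem_coe.2 (Finset.mem_univ _), ?_⟩
        simp only [hee]
        rw [if_pos hj]
      · obtain ⟨j, hj⟩ := Fin.exists_succ_eq.2 hk0
        refine ⟨j, Finset.mem_coe.2 (Finset.mem_univ _), ?_⟩
        simp only [hee]
        rw [if_neg fun h => hki (hj.symm.trans h)]
        exact hj
    · intro j _; rfl
  -- key pointwise identity for the substitution
  have hAee : ∀ (i : Fin (m+1)) (j : Fin m) (u), A (ee i j) (τ i u) = u j := by
    refine Fin.cases ?_ ?_
    · intro j u
      have h1 : ee 0 j = j.succ := if_neg (Fin.succ_ne_zero j)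
      rw [h1, hAs]
      simp only [hτ, Fin.cons_zero, id_eq]
    · intro j₀ j u
      have h2 : τ j₀.succ = ⇑(sigmaL d m j₀) := by simp only [hτ, Fin.cons_succ]
      rcases eq_or_ne j j₀ with rfl | hne
      · have h1 : ee j.succ j = 0 := if_pos rfl
        rw [h1, hA0, h2, sum_sigmaL, neg_neg]
      · have h1 : ee j₀.succ j = j.succ := if_neg (fun h => hne (Fin.succ_injective _ h))
        rw [h1, hAs, h2, sigmaL_apply, Function.update_of_ne hne]
  -- the main ENNReal-valued objects
  set F : Fin (m+1) → EuclideanSpace ℝ (Fin d) → ℝ≥0∞ :=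
    fun k x => (‖ρ' k x‖₊ : ℝ≥0∞) ^ (p k) with hF
  have hFmeas : ∀ k, Measurable (F k) := fun k =>
    (measurable_coe_nnreal_ennreal.comp (hmeas k).nnnorm).pow_const (p k)
  set g : Fin (m+1) → (Fin m → EuclideanSpace ℝ (Fin d)) → ℝ≥0∞ :=
    fun i u => ∏ k ∈ Finset.univ.erase i, F k (A k u) with hg
  have hgmeas : ∀ i, Measurable (g i) := fun i =>
    Finset.measurable_prod _ fun k _ => (hFmeas k).comp (hAmeas k)
  set I : Fin (m+1) → ℝ≥0∞ := fun k => ∫⁻ x, F k x with hI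
  -- computing the integrals of the g i
  have hgint : ∀ i, ∫⁻ u, g i u = ∏ k ∈ Finset.univ.erase i, I k := by
    intro i
    rw [← (hτmp i).lintegral_comp (hgmeas i)]
    have h2 : ∀ u, g i (τ i u) = ∏ j : Fin m, F (ee i j) (u j) := by
      intro u
      simp only [hg]
      rw [hee_erase i (fun k => F k (A k (τ i u)))]
      exact Finset.prod_congr rfl fun j _ => by rw [hAee]
    simp only [h2]
    rw [lintegral_pi_prod (fun j => F (ee i j)) (fun j => hFmeas _), hee_erase i I]
  -- the primed integrand
  set f' : (Fin m → EuclideanSpace ℝ (Fin d)) → ℝ :=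
    fun u => ρ' 0 (-∑ j, u j) * ∏ j : Fin m, ρ' j.succ (u j) with hf'
  -- pointwise identity
  have hpt : ∀ u, (‖f' u‖₊ : ℝ≥0∞) = ∏ i, (g i u) ^ t i := by
    intro u
    have e1 : (‖f' u‖₊ : ℝ≥0∞) = ∏ k, (‖ρ' k (A k u)‖₊ : ℝ≥0∞) := by
      rw [Fin.prod_univ_succ]
      simp only [hf', nnnorm_mul, nnnorm_prod, ENNReal.coe_mul, ENNReal.coe_finset_prod,
        hA0, hAs]
    have e2 : ∀ k, (‖ρ' k (A k u)‖₊ : ℝ≥0∞) = (F k (A k u)) ^ (1 / p k) := by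
      intro k
      rw [hF, ← ENNReal.rpow_mul, mul_one_div_cancel (hp0 k).ne', ENNReal.rpow_one]
    have e3 := key_prod t (fun k => 1 / p k) ht0 hq (fun k => F k (A k u))
    rw [e1, show (∏ i, (g i u) ^ t i) = ∏ k, (F k (A k u)) ^ (1 / p k) from e3]
    exact Finset.prod_congr rfl fun k _ => e2 k
  -- Hölder
  have hHolder : ∫⁻ u, (‖f' u‖₊ : ℝ≥0∞) ≤ ∏ i, (∫⁻ u, g i u) ^ t i := by
    simp only [hpt]
    exact ENNReal.lintegral_prod_norm_pow_le Finset.univ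
      (fun i _ => (hgmeas i).aemeasurable) hts (fun i _ => ht0 i)
  -- collecting
  have hB : ∫⁻ u, (‖f' u‖₊ : ℝ≥0∞) ≤ ∏ k, (I k) ^ (1 / p k) := by
    refine hHolder.trans ?_
    have h1 : ∏ i, (∫⁻ u, g i u) ^ t i = ∏ i, (∏ k ∈ Finset.univ.erase i, I k) ^ t i :=
      Finset.prod_congr rfl fun i _ => by rw [hgint i]
    rw [h1, key_prod t (fun k => 1 / p k) ht0 hq I]
  -- identification with eLpNorms
  have hsn : ∀ k, eLpNorm (ρ' k) (ENNReal.ofReal (p k)) volume = (I k) ^ (1 / p k) := by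
    intro k
    rw [eLpNorm_eq_lintegral_rpow_enorm_toReal (by simp [ENNReal.ofReal_eq_zero, not_le, hp0 k])
      ENNReal.ofReal_ne_top, ENNReal.toReal_ofReal (hp0 k).le]
    rfl
  have hprod_eq : ∏ k, (I k) ^ (1 / p k)
      = ∏ k, eLpNorm (ρ k) (ENNReal.ofReal (p k)) volume :=
    Finset.prod_congr rfl fun k _ => by rw [hsnorm_eq k, hsn k]
  have hBfin : (∏ k, (I k) ^ (1 / p k)) ≠ ⊤ := by
    rw [hprod_eq]
    exact (ENNReal.prod_lt_top fun k _ => (hρ k).2).ne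
  -- replacing the integrand a.e.
  have hcong : ∫ u : Fin m → EuclideanSpace ℝ (Fin d),
      ρ 0 (-∑ j, u j) * ∏ j : Fin m, ρ j.succ (u j) = ∫ u, f' u := by
    apply integral_congr_ae
    have hqe : ∀ j : Fin m, (fun u : Fin m → EuclideanSpace ℝ (Fin d) => ρ j.succ (u j))
        =ᵐ[volume] (fun u => ρ' j.succ (u j)) :=
      fun j => (hae j.succ).comp_tendsto (qmp_eval j).tendsto_ae
    have h0' : (fun u : Fin m → EuclideanSpace ℝ (Fin d) => ρ 0 (-∑ j, u j))
        =ᵐ[volume] (fun u => ρ' 0 (-∑ j, u j)) := by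
      have hq0 : Measure.QuasiMeasurePreserving
          (fun u : Fin m → EuclideanSpace ℝ (Fin d) => -∑ j, u j) volume volume := by
        have heq : (fun u : Fin m → EuclideanSpace ℝ (Fin d) => -∑ j, u j)
            = (fun v : Fin m → EuclideanSpace ℝ (Fin d) => v ⟨0, hm⟩) ∘ ⇑(sigmaL d m ⟨0, hm⟩) := by
          funext u
          simp [Function.comp, sigmaL_apply, Function.update_self]
        rw [heq]
        exact (qmp_eval _).comp (sigmaL_mp _).quasiMeasurePreserving
      exact (hae 0).comp_tendsto hq0.tendsto_ae
    have hall : ∀ᵐ u : Fin m → EuclideanSpace ℝ (Fin d) ∂volume,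
        ∀ j : Fin m, ρ j.succ (u j) = ρ' j.succ (u j) := ae_all_iff.2 hqe
    filter_upwards [h0', hall] with u h1 h2
    rw [hf']
    simp only []
    rw [h1]
    exact congrArg _ (Finset.prod_congr rfl fun j _ => h2 j)
  rw [hcong]
  have habs : |∫ u, f' u| ≤ (∫⁻ u, (‖f' u‖₊ : ℝ≥0∞)).toReal := by
    rw [← Real.norm_eq_abs]
    simpa only [ofReal_norm, enorm_eq_nnnorm] using norm_integral_le_lintegral_norm (μ := volume) f'
  refine habs.trans ?_
  calc (∫⁻ u, (‖f' u‖₊ : ℝ≥0∞)).toReal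
      ≤ (∏ k, (I k) ^ (1 / p k)).toReal := ENNReal.toReal_mono hBfin hB
    _ = ∏ i, (eLpNorm (ρ i) (ENNReal.ofReal (p i)) volume).toReal := by
        rw [hprod_eq, ENNReal.toReal_prod]
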